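/- Let A be a strictly positive operator on H and T ∈ B_A(H) with ‖T‖_A ≠ 0. Then w_A(T) ≥ (1/(2‖T‖_A))·max{‖T‖_A² + c_A(T²), m_A(T)² + w_A(T²)}, where c_A(S) = inf{|⟨Sx,x⟩_A| : ‖x‖_A=1} and m_A(T) = inf{‖Tx‖_A : ‖x‖_A = 1}. -/

import Mathlib

/-!
Writing `⟨x, y⟩_A = ⟨A^{1/2} x, A^{1/2} y⟩` turns `‖·‖_A` into an ordinary norm, so
Cauchy–Schwarz and the parallelogram law hold. Fix an `A`-unit vector `x`, let `T♯` be an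
`A`-adjoint of `T` and pick `|l| = 1` with `l² ⟨T²x, x⟩_A = |⟨T²x, x⟩_A|`. Since
`⟨T²x, x⟩_A = ⟨Tx, T♯x⟩_A`,

    ‖Tx‖_A² + |⟨T²x, x⟩_A| = Re ⟨Tx, Tx + l² T♯x⟩_A
                           ≤ ‖Tx‖_A ‖(l̄ T + l T♯) x‖_A ≤ 2 w_A(T) ‖Tx‖_A,

because `l̄ T + l T♯` is `A`-symmetric with `|Re ⟨(l̄ T + l T♯) u, u⟩_A| ≤ 2 w_A(T) ‖u‖_A²`,
and by polarization the `A`-norm of an `A`-symmetric operator is bounded by such a constant.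
Taking the supremum over `x`, or bounding `‖Tx‖_A` below by `m_A(T)`, gives both lower bounds.
-/

noncomputable section
open Complex ContinuousLinearMap

variable {H : Type*} [NormedAddCommGroup H] [InnerProductSpace ℂ H] [CompleteSpace H]

/-- The `A`-inner product `⟨x,y⟩_A = ⟨Ax,y⟩`. -/
def innA (A : H →L[ℂ] H) (x y : H) : ℂ := inner ℂ (A x) y

/-- The `A`-seminorm of a vector, `‖x‖_A = √⟨x,x⟩_A`. -/
def vnormA (A : H →L[ℂ] H) (x : H) : ℝ := Real.sqrt (innA A x x).re

/-- The `A`-numerical radius `w_A(T) = sup{|⟨Tx,x⟩_A| : ‖x‖_A = 1}`. -/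
def wA (A T : H →L[ℂ] H) : ℝ :=
  sSup {r : ℝ | ∃ x : H, vnormA A x = 1 ∧ r = ‖innA A (T x) x‖}

/-- The `A`-operator seminorm, `sup` over `A`-unit vectors in the closure of the range of `A`. -/
def opNormA (A T : H →L[ℂ] H) : ℝ :=
  sSup {r : ℝ | ∃ x : H, x ∈ closure (Set.range A) ∧ vnormA A x = 1 ∧ r = vnormA A (T x)}

/-- The `A`-operator seminorm, `sup` over all `A`-unit vectors (used when `A > 0`). -/
def opNormA' (A T : H →L[ℂ] H) : ℝ :=
  sSup {r : ℝ | ∃ x : H, vnormA A x = 1 ∧ r = vnormA A (T x)}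

/-- The `A`-Crawford number `c_A(T) = inf{|⟨Tx,x⟩_A| : ‖x‖_A = 1}`. -/
def cA (A T : H →L[ℂ] H) : ℝ :=
  sInf {r : ℝ | ∃ x : H, vnormA A x = 1 ∧ r = ‖innA A (T x) x‖}

/-- The `A`-minimum modulus `m_A(T) = inf{‖Tx‖_A : ‖x‖_A = 1}` (version for `A > 0`). -/
def mA (A T : H →L[ℂ] H) : ℝ :=
  sInf {r : ℝ | ∃ x : H, vnormA A x = 1 ∧ r = vnormA A (T x)}

/-- `S` is an `A`-adjoint of `T`, i.e. `A S = T* A`. -/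
def IsAAdjoint (A T S : H →L[ℂ] H) : Prop :=
  A.comp S = (ContinuousLinearMap.adjoint T).comp A

/-- `A` is strictly positive: positive and `⟨Ax,x⟩ > 0` for all `x ≠ 0`. -/
def StrictPos (A : H →L[ℂ] H) : Prop :=
  A.IsPositive ∧ ∀ x : H, x ≠ 0 → 0 < (innA A x x).re

/-- The inner product on `H ⊕ H`. -/
def inn2 (u v : H × H) : ℂ := inner ℂ u.1 v.1 + inner ℂ u.2 v.2

/-- `B = diag(A, A)` acting on `H ⊕ H`. -/
def Bop (A : H →L[ℂ] H) : H × H →L[ℂ] H × H := A.prodMap A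

/-- The `B`-seminorm on `H ⊕ H`. -/
def vnormB (A : H →L[ℂ] H) (u : H × H) : ℝ := Real.sqrt (inn2 (Bop A u) u).re

/-- The `B`-numerical radius on `H ⊕ H`, where `B = diag(A, A)`. -/
def wB (A : H →L[ℂ] H) (S : H × H →L[ℂ] H × H) : ℝ :=
  sSup {r : ℝ | ∃ u : H × H, vnormB A u = 1 ∧ r = ‖inn2 (Bop A (S u)) u‖}

/-- The `2 × 2` operator matrix `[[X, Y], [Z, W]]` acting on `H ⊕ H`. -/
def blk (X Y Z W : H →L[ℂ] H) : H × H →L[ℂ] H × H :=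
  ((X.comp (ContinuousLinearMap.fst ℂ H H)) + (Y.comp (ContinuousLinearMap.snd ℂ H H))).prod
    ((Z.comp (ContinuousLinearMap.fst ℂ H H)) + (W.comp (ContinuousLinearMap.snd ℂ H H)))

open ComplexConjugate

lemma Real.nonempty_and_bddAbove_of_sSup_ne_zero {s : Set ℝ} (h : sSup s ≠ 0) :
    s.Nonempty ∧ BddAbove s := by
  refine ⟨Set.nonempty_iff_ne_empty.mpr fun hs => h ?_, not_not.mp fun hs => h ?_⟩
  · rw [hs, Real.sSup_empty]
  · exact Real.sSup_of_not_bddAbove hs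

lemma Real.sSup_sq_le {s : Set ℝ} (hs : s.Nonempty) (h0 : ∀ t ∈ s, 0 ≤ t) {b : ℝ}
    (h : ∀ t ∈ s, t ^ 2 ≤ b) : sSup s ^ 2 ≤ b := by
  obtain ⟨t, ht⟩ := hs
  have hb : 0 ≤ b := (sq_nonneg t).trans (h t ht)
  have hle : sSup s ≤ √b :=
    Real.sSup_le (fun t ht => (Real.le_sqrt (h0 t ht) hb).mpr (h t ht)) (Real.sqrt_nonneg b)
  exact (Real.le_sqrt (Real.sSup_nonneg h0) hb).mp hle

lemma Complex.exists_norm_eq_one_sq_mul_eq_norm (c : ℂ) :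
    ∃ l : ℂ, ‖l‖ = 1 ∧ l ^ 2 * c = ‖c‖ := by
  refine ⟨exp ((-(c.arg / 2) : ℝ) * I), norm_exp_ofReal_mul_I _, ?_⟩
  nth_rewrite 2 [← norm_mul_exp_arg_mul_I c]
  rw [← exp_nat_mul, mul_left_comm, ← exp_add]
  push_cast
  ring_nf
  simp

section InnerProductSpace

variable {E : Type*} [NormedAddCommGroup E] [InnerProductSpace ℂ E]

lemma vnormA_nonneg (A : E →L[ℂ] E) (x : E) : 0 ≤ vnormA A x := Real.sqrt_nonneg _

lemma conj_innA {A : E →L[ℂ] E} (hA : (A : E →ₗ[ℂ] E).IsSymmetric) (x y : E) :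
    conj (innA A x y) = innA A y x := by
  rw [innA, inner_conj_symm]
  exact (hA y x).symm

lemma innA_smul_smul (A : E →L[ℂ] E) (c : ℂ) (x y : E) :
    innA A (c • x) (c • y) = ((‖c‖ ^ 2 : ℝ) : ℂ) * innA A x y := by
  rw [innA, innA, map_smul, inner_smul_left, inner_smul_right, ← mul_assoc, conj_mul',
    ofReal_pow]

lemma mA_nonneg (A T : E →L[ℂ] E) : 0 ≤ mA A T :=
  Real.sInf_nonneg (by rintro _ ⟨x, -, rfl⟩; exact vnormA_nonneg A _)

lemma mA_le_vnormA_apply (A T : E →L[ℂ] E) {x : E} (hx : vnormA A x = 1) :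
    mA A T ≤ vnormA A (T x) :=
  csInf_le ⟨0, by rintro _ ⟨y, -, rfl⟩; exact vnormA_nonneg A _⟩ ⟨x, hx, rfl⟩

lemma cA_le_norm_innA_apply (A T : E →L[ℂ] E) {x : E} (hx : vnormA A x = 1) :
    cA A T ≤ ‖innA A (T x) x‖ :=
  csInf_le ⟨0, by rintro _ ⟨y, -, rfl⟩; exact norm_nonneg _⟩ ⟨x, hx, rfl⟩

lemma opNormA'_sq_add_cA_sq_le {A T : E →L[ℂ] E} (hE : ∃ x, vnormA A x = 1) {b : ℝ}
    (h : ∀ x, vnormA A x = 1 → vnormA A (T x) ^ 2 + ‖innA A ((T ^ 2) x) x‖ ≤ b) :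
    opNormA' A T ^ 2 + cA A (T ^ 2) ≤ b := by
  obtain ⟨x₀, hx₀⟩ := hE
  suffices opNormA' A T ^ 2 ≤ b - cA A (T ^ 2) by linarith
  refine Real.sSup_sq_le ?_ ?_ ?_
  · exact ⟨_, x₀, hx₀, rfl⟩
  · rintro _ ⟨x, -, rfl⟩
    exact vnormA_nonneg A _
  · rintro _ ⟨x, hx, rfl⟩
    linarith [h x hx, cA_le_norm_innA_apply A (T ^ 2) hx]

lemma mA_sq_add_wA_sq_le {A T : E →L[ℂ] E} (hE : ∃ x, vnormA A x = 1) {b : ℝ}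
    (h : ∀ x, vnormA A x = 1 → vnormA A (T x) ^ 2 + ‖innA A ((T ^ 2) x) x‖ ≤ b) :
    mA A T ^ 2 + wA A (T ^ 2) ≤ b := by
  obtain ⟨x₀, hx₀⟩ := hE
  suffices wA A (T ^ 2) ≤ b - mA A T ^ 2 by linarith
  refine csSup_le ⟨_, x₀, hx₀, rfl⟩ ?_
  rintro _ ⟨x, hx, rfl⟩
  have hm := pow_le_pow_left₀ (mA_nonneg A T) (mA_le_vnormA_apply A T hx) 2
  linarith [h x hx]

end InnerProductSpace

lemma innA_eq_inner_sqrt {A : H →L[ℂ] H} (hA : A.IsPositive) (x y : H) :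
    innA A x y = inner ℂ (CFC.sqrt A x) (CFC.sqrt A y) := by
  have hsa : IsSelfAdjoint (CFC.sqrt A) := (CFC.sqrt_nonneg A).isSelfAdjoint
  conv_lhs => rw [innA, ← CFC.sqrt_mul_sqrt_self A ((nonneg_iff_isPositive A).mpr hA)]
  rw [mul_def, comp_apply, ← adjoint_inner_right, hsa.adjoint_eq]

lemma vnormA_eq_norm_sqrt {A : H →L[ℂ] H} (hA : A.IsPositive) (x : H) :
    vnormA A x = ‖CFC.sqrt A x‖ := by
  rw [vnormA, innA_eq_inner_sqrt hA, ← RCLike.re_eq_complex_re, inner_self_eq_norm_sq,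
    Real.sqrt_sq (norm_nonneg _)]

lemma re_innA_self {A : H →L[ℂ] H} (hA : A.IsPositive) (x : H) :
    (innA A x x).re = vnormA A x ^ 2 := by
  rw [innA_eq_inner_sqrt hA, vnormA_eq_norm_sqrt hA, ← RCLike.re_eq_complex_re,
    inner_self_eq_norm_sq]

lemma norm_innA_le {A : H →L[ℂ] H} (hA : A.IsPositive) (x y : H) :
    ‖innA A x y‖ ≤ vnormA A x * vnormA A y := by
  rw [innA_eq_inner_sqrt hA, vnormA_eq_norm_sqrt hA, vnormA_eq_norm_sqrt hA]
  exact norm_inner_le_norm _ _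

lemma vnormA_smul {A : H →L[ℂ] H} (hA : A.IsPositive) (c : ℂ) (x : H) :
    vnormA A (c • x) = ‖c‖ * vnormA A x := by
  rw [vnormA_eq_norm_sqrt hA, vnormA_eq_norm_sqrt hA, map_smul, norm_smul]

lemma vnormA_add_sq_add_vnormA_sub_sq {A : H →L[ℂ] H} (hA : A.IsPositive) (x y : H) :
    vnormA A (x + y) ^ 2 + vnormA A (x - y) ^ 2 = 2 * (vnormA A x ^ 2 + vnormA A y ^ 2) := by
  simp only [vnormA_eq_norm_sqrt hA, map_add, map_sub]
  exact parallelogram_law_with_norm ℂ _ _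

lemma IsAAdjoint.innA_apply_left {A T S : H →L[ℂ] H} (hS : IsAAdjoint A T S) (u v : H) :
    innA A (S u) v = innA A u (T v) := by
  rw [innA, innA, ← comp_apply A S, hS, comp_apply, adjoint_inner_left]

lemma IsAAdjoint.innA_apply_right {A T S : H →L[ℂ] H} (hA : (A : H →ₗ[ℂ] H).IsSymmetric)
    (hS : IsAAdjoint A T S) (u v : H) : innA A (T u) v = innA A u (S v) := by
  rw [← conj_innA hA (S v) u, hS.innA_apply_left, conj_innA hA]

lemma norm_innA_apply_le_wA {A T : H →L[ℂ] H} (hA : A.IsPositive) {M : ℝ}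
    (hM : ∀ x, vnormA A x = 1 → vnormA A (T x) ≤ M) {x : H} (hx : vnormA A x = 1) :
    ‖innA A (T x) x‖ ≤ wA A T := by
  refine le_csSup ⟨M, ?_⟩ ⟨x, hx, rfl⟩
  rintro _ ⟨y, hy, rfl⟩
  calc ‖innA A (T y) y‖ ≤ vnormA A (T y) * vnormA A y := norm_innA_le hA _ _
    _ ≤ M := by rw [hy, mul_one]; exact hM y hy

lemma norm_innA_apply_le_wA_mul_sq {A T : H →L[ℂ] H} (hA : A.IsPositive) {M : ℝ}
    (hM : ∀ x, vnormA A x = 1 → vnormA A (T x) ≤ M) (u : H) :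
    ‖innA A (T u) u‖ ≤ wA A T * vnormA A u ^ 2 := by
  obtain hu | hu := (vnormA_nonneg A u).eq_or_lt
  · have h := norm_innA_le hA (T u) u
    rw [← hu, mul_zero] at h
    rw [← hu]
    simpa using h
  · set s := vnormA A u
    have hx : vnormA A (((s⁻¹ : ℝ) : ℂ) • u) = 1 := by
      rw [vnormA_smul hA, norm_real, Real.norm_of_nonneg (inv_nonneg.mpr hu.le),
        inv_mul_cancel₀ hu.ne']
    have h := norm_innA_apply_le_wA hA hM hx
    rw [map_smul, innA_smul_smul, norm_mul, norm_real, Real.norm_of_nonneg (by positivity),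
      norm_real, Real.norm_of_nonneg (inv_nonneg.mpr hu.le), inv_pow,
      inv_mul_le_iff₀ (by positivity)] at h
    linarith

lemma two_mul_re_innA_le {A B : H →L[ℂ] H} (hA : A.IsPositive)
    (hB : ∀ u v, innA A (B u) v = innA A u (B v)) {K : ℝ}
    (hK : ∀ u, |(innA A (B u) u).re| ≤ K * vnormA A u ^ 2) (u v : H) :
    2 * (innA A (B u) v).re ≤ K * (vnormA A u ^ 2 + vnormA A v ^ 2) := by
  have hsymm : (innA A (B v) u).re = (innA A (B u) v).re := by
    rw [hB, ← conj_innA hA.isSymmetric, conj_re]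
  have hpol : 4 * (innA A (B u) v).re
      = (innA A (B (u + v)) (u + v)).re - (innA A (B (u - v)) (u - v)).re := by
    simp only [innA_eq_inner_sqrt hA] at hsymm ⊢
    simp only [map_add, map_sub, inner_add_left, inner_add_right, inner_sub_left,
      inner_sub_right, add_re, sub_re]
    linarith
  have hplus := (le_abs_self _).trans (hK (u + v))
  have hminus := (neg_abs_le _).trans' (neg_le_neg (hK (u - v)))
  have hpar := congrArg (K * ·) (vnormA_add_sq_add_vnormA_sub_sq hA u v)
  linarith

lemma vnormA_apply_le_of_abs_re_innA_le {A B : H →L[ℂ] H} (hA : A.IsPositive)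
    (hB : ∀ u v, innA A (B u) v = innA A u (B v)) {K : ℝ}
    (hK : ∀ u, |(innA A (B u) u).re| ≤ K * vnormA A u ^ 2) {x : H} (hx : vnormA A x = 1) :
    vnormA A (B x) ≤ K := by
  obtain hy | hy := (vnormA_nonneg A (B x)).eq_or_lt
  · rw [← hy]
    simpa [hx] using (abs_nonneg _).trans (hK x)
  · set s := vnormA A (B x)
    have h := two_mul_re_innA_le hA hB hK x (((s⁻¹ : ℝ) : ℂ) • B x)
    have hre : (innA A (B x) (((s⁻¹ : ℝ) : ℂ) • B x)).re = s := by
      rw [innA, inner_smul_right, re_ofReal_mul, ← innA, re_innA_self hA]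
      change s⁻¹ * s ^ 2 = s
      field_simp
    rw [hre, hx, vnormA_smul hA, norm_real, Real.norm_of_nonneg (inv_nonneg.mpr hy.le),
      inv_mul_cancel₀ hy.ne'] at h
    linarith

lemma vnormA_conj_smul_add_smul_apply_le {A T S : H →L[ℂ] H} (hA : A.IsPositive)
    (hS : IsAAdjoint A T S) {w : ℝ} (hw : ∀ u, ‖innA A (T u) u‖ ≤ w * vnormA A u ^ 2)
    {l : ℂ} (hl : ‖l‖ = 1) {x : H} (hx : vnormA A x = 1) :
    vnormA A ((conj l • T + l • S) x) ≤ 2 * w := by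
  have expand : ∀ u v, innA A ((conj l • T + l • S) u) v
      = l * innA A (T u) v + conj l * innA A (S u) v := by
    intro u v
    simp only [innA, add_apply, smul_apply, map_add, map_smul, inner_add_left, inner_smul_left,
      conj_conj]
  refine vnormA_apply_le_of_abs_re_innA_le hA (fun u v => ?_) (fun u => ?_) hx
  · have hTS := hS.innA_apply_right hA.isSymmetric u v
    have hST := hS.innA_apply_left u v
    rw [expand]
    simp only [innA_eq_inner_sqrt hA, add_apply, smul_apply, map_add, map_smul,
      inner_add_right, inner_smul_right] at hTS hST ⊢
    linear_combination l * hTS + conj l * hST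
  · have hSu : innA A (S u) u = conj (innA A (T u) u) := by
      rw [hS.innA_apply_left, conj_innA hA.isSymmetric]
    have hre : (innA A ((conj l • T + l • S) u) u).re = 2 * (l * innA A (T u) u).re := by
      rw [expand, hSu, ← map_mul, add_re, conj_re]
      ring
    calc |(innA A ((conj l • T + l • S) u) u).re|
        = 2 * |(l * innA A (T u) u).re| := by rw [hre, abs_mul, abs_two]
      _ ≤ 2 * ‖l * innA A (T u) u‖ := by gcongr; exact abs_re_le_norm _
      _ ≤ 2 * w * vnormA A u ^ 2 := by rw [norm_mul, hl, one_mul, mul_assoc]; gcongr; exact hw u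

lemma vnormA_apply_sq_add_norm_innA_apply_apply_le {A T S : H →L[ℂ] H} (hA : A.IsPositive)
    (hS : IsAAdjoint A T S) {w : ℝ} (hw : ∀ u, ‖innA A (T u) u‖ ≤ w * vnormA A u ^ 2)
    {x : H} (hx : vnormA A x = 1) :
    vnormA A (T x) ^ 2 + ‖innA A (T (T x)) x‖ ≤ 2 * w * vnormA A (T x) := by
  set c := innA A (T (T x)) x with hc_def
  obtain ⟨l, hl, hlc⟩ := exists_norm_eq_one_sq_mul_eq_norm c
  have hc : innA A (T x) (T x + l ^ 2 • S x) = innA A (T x) (T x) + l ^ 2 * c := by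
    rw [hc_def, hS.innA_apply_right hA.isSymmetric (T x) x]
    simp only [innA, inner_add_right, inner_smul_right]
  have hvec : T x + l ^ 2 • S x = l • (conj l • T + l • S) x := by
    rw [add_apply, smul_apply, smul_apply, smul_add, smul_smul, smul_smul, mul_conj',
      hl, ← sq]
    simp
  calc vnormA A (T x) ^ 2 + ‖c‖ = (innA A (T x) (T x + l ^ 2 • S x)).re := by
        rw [hc, add_re, hlc, ofReal_re, re_innA_self hA]
    _ ≤ vnormA A (T x) * vnormA A (T x + l ^ 2 • S x) :=
        (re_le_norm _).trans (norm_innA_le hA _ _)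
    _ = vnormA A (T x) * vnormA A ((conj l • T + l • S) x) := by
        rw [hvec, vnormA_smul hA, hl, one_mul]
    _ ≤ vnormA A (T x) * (2 * w) := by
        gcongr
        · exact vnormA_nonneg A _
        · exact vnormA_conj_smul_add_smul_apply_le hA hS hw hl hx
    _ = 2 * w * vnormA A (T x) := by ring

theorem stmt19 (A T : H →L[ℂ] H) (hA : StrictPos A) (hT : ∃ S, IsAAdjoint A T S)
    (hne : opNormA' A T ≠ 0) :
    (1 / (2 * opNormA' A T)) *
        max ((opNormA' A T)^2 + cA A (T^2)) ((mA A T)^2 + wA A (T^2)) ≤ wA A T := by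
  obtain ⟨S, hS⟩ := hT
  -- `sSup` of an empty or unbounded set is `0`, so `‖T‖_A ≠ 0` makes `T` `A`-bounded.
  obtain ⟨⟨_, x₀, hx₀, rfl⟩, hbdd⟩ := Real.nonempty_and_bddAbove_of_sSup_ne_zero hne
  have hTx : ∀ x, vnormA A x = 1 → vnormA A (T x) ≤ opNormA' A T :=
    fun x hx => le_csSup hbdd ⟨x, hx, rfl⟩
  have hN : 0 < opNormA' A T := ((vnormA_nonneg A _).trans (hTx x₀ hx₀)).lt_of_ne' hne
  have hw0 : 0 ≤ wA A T := (norm_nonneg _).trans (norm_innA_apply_le_wA hA.1 hTx hx₀)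
  have key : ∀ x, vnormA A x = 1 →
      vnormA A (T x) ^ 2 + ‖innA A ((T ^ 2) x) x‖ ≤ 2 * opNormA' A T * wA A T := by
    intro x hx
    calc vnormA A (T x) ^ 2 + ‖innA A (T (T x)) x‖ ≤ 2 * wA A T * vnormA A (T x) :=
          vnormA_apply_sq_add_norm_innA_apply_apply_le hA.1 hS
            (norm_innA_apply_le_wA_mul_sq hA.1 hTx) hx
      _ ≤ 2 * wA A T * opNormA' A T := by gcongr; exact hTx x hx
      _ = 2 * opNormA' A T * wA A T := by ring
  rw [one_div, inv_mul_le_iff₀ (by positivity)]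
  exact max_le (opNormA'_sq_add_cA_sq_le ⟨x₀, hx₀⟩ key) (mA_sq_add_wA_sq_le ⟨x₀, hx₀⟩ key)
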